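/- arXiv:1604.05693 — 3 statements merged into one kernel-verified Lean document; each statement's English description precedes it below -/
import Mathlib

section
/- Let P and W be Π¹₁-wellfounded level-1 trees. Then the order type of (rep(P), <^P) is strictly less than the order type of (rep(W), <^W) if and only if there exist a map σ factoring (P, W) and an element w ∈ W such that σ(p) <_BK w for every p ∈ P. -/
noncomputable section

/-- Brouwer–Kleene strict order on finite sequences, relative to a strict order `lt`
on entries: `s <_BK t` iff `s` properly extends `t`, or at the least position where
both are defined and they differ, the entry of `s` is smaller; `[]` is greatest. -/
def BKltBy {α : Type*} (lt : α → α → Prop) : List α → List α → Prop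
  | [], _ => False
  | _ :: _, [] => True
  | a :: s, b :: t => lt a b ∨ (a = b ∧ BKltBy lt s t)

/-- The Brouwer–Kleene order on finite sequences of natural numbers. -/
def BKlt : List ℕ → List ℕ → Prop := BKltBy (· < ·)

/-- A level-1 tree: a set of nonempty finite sequences of naturals such that whenever
`s⌢(n) ∈ P`: if `s ≠ []` then `s ∈ P`, and `s⌢(m) ∈ P` for every `m < n`. -/
def IsLevel1Tree (P : Set (List ℕ)) : Prop :=
  (∀ s ∈ P, s ≠ []) ∧
  ∀ (s : List ℕ) (n : ℕ), s ++ [n] ∈ P →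
    (s ≠ [] → s ∈ P) ∧ ∀ m < n, s ++ [m] ∈ P

/-- A level-1 tree is regular iff the sequence `(1)` is not in it. -/
def Regular1 (P : Set (List ℕ)) : Prop := ([1] : List ℕ) ∉ P

/-- `P` is Π¹₁-wellfounded: there is no infinite branch through `P`. -/
def Pi11WF (P : Set (List ℕ)) : Prop :=
  ¬ ∃ x : ℕ → ℕ, ∀ n : ℕ, 0 < n → (List.ofFn fun i : Fin n => x i) ∈ P

/-- `rep(P)`: the pair `(p, none)` codes the element `(p)` and `(p, some n)` codes
`(p, n)`. -/
def Rep1 (P : Set (List ℕ)) : Set (List ℕ × Option ℕ) := {x | x.1 ∈ P}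

def optNatLt : Option ℕ → Option ℕ → Prop
  | some n, some m => n < m
  | some _, none => True
  | _, _ => False

/-- The order `<^P` on `rep(P)`. -/
def Rep1lt (x y : List ℕ × Option ℕ) : Prop :=
  BKlt x.1 y.1 ∨ (x.1 = y.1 ∧ optNatLt x.2 y.2)

/-- The first uncountable ordinal. -/
def omega1 : Ordinal := (Cardinal.aleph 1).ord

/-- The tuple `(f p)_{p ∈ P}` respects the level-1 tree `P`: each entry is a countable
limit ordinal and `p ↦ f p` is order preserving from `(P, <_BK)` to the ordinals. -/
def Respects1 (P : Set (List ℕ)) (f : List ℕ → Ordinal) : Prop :=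
  (∀ p ∈ P, f p < omega1 ∧ Order.IsSuccLimit (f p)) ∧
  ∀ p ∈ P, ∀ q ∈ P, BKlt p q → f p < f q

/-- `σ` factors `(P, W)`: `σ(∅) = ∅` and `σ` preserves the Brouwer–Kleene order. -/
def Factors (P W : Set (List ℕ)) (σ : List ℕ → List ℕ) : Prop :=
  σ [] = [] ∧ (∀ p ∈ P, σ p ∈ insert ([] : List ℕ) W) ∧
  ∀ s ∈ insert ([] : List ℕ) P, ∀ t ∈ insert ([] : List ℕ) P,
    BKlt s t → BKlt (σ s) (σ t)

/-- Partial level ≤1 tree `(P, t)`; `t = none` codes the value `-1`. -/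
def IsPartialLevelLe1Tree (P : Set (List ℕ)) (t : Option (List ℕ)) : Prop :=
  P.Finite ∧ IsLevel1Tree P ∧ Regular1 P ∧
  (match t with
   | none => P.Nonempty
   | some s => s ∉ P ∧ IsLevel1Tree (insert s P) ∧ Regular1 (insert s P))

/-- The tuple coded by `f` on `P` together with the value `v` at `t` respects the
partial level ≤1 tree `(P, t)`. -/
def RespectsP1 (P : Set (List ℕ)) (t : Option (List ℕ)) (f : List ℕ → Ordinal)
    (v : Ordinal) : Prop :=
  match t with
  | none => Respects1 P f ∧ v < Ordinal.omega0
  | some s => Respects1 P f ∧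
      Respects1 (insert s P) (fun p => if p = s then v else f p)

/-- A level-2 tree of uniform cofinalities. -/
structure Level2Tree where
  dom : Set (List (List ℕ))
  tr : List (List ℕ) → Set (List ℕ)
  nd : List (List ℕ) → Option (List ℕ)
  nil_mem : [] ∈ dom
  take_mem : ∀ q ∈ dom, ∀ n : ℕ, q.take n ∈ dom
  lvl1 : ∀ q ∈ dom, IsLevel1Tree {a : List ℕ | q ++ [a] ∈ dom}
  tr_nil : tr [] = ∅
  nd_nil : nd [] = some [0]
  ptree : ∀ q ∈ dom, IsPartialLevelLe1Tree (tr q) (nd q)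
  compl : ∀ q ∈ dom, ∀ l : ℕ, l < q.length →
    ∃ s : List ℕ, nd (q.take l) = some s ∧ tr (q.take (l + 1)) = insert s (tr (q.take l))

/-- The node `Q_node(q)`, read as an element of `ℕ^{<ω}`. -/
def Level2Tree.ndVal (Q : Level2Tree) (q : List (List ℕ)) : List ℕ := (Q.nd q).getD []

/-- The interleaved sequence `ᾱ ⊕ q`. -/
def Level2Tree.oplus (Q : Level2Tree) (f : List ℕ → Ordinal) (q : List (List ℕ)) :
    List (Ordinal × Option (List ℕ)) :=
  (List.range q.length).map fun i => (f (Q.ndVal (q.take i)), some (q.getD i []))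

/-- The interleaved sequence `ᾱ ⊕ q⌢(-1)`, where `v` is the entry of the tuple at
the node `Q_node(q)`. -/
def Level2Tree.oplusNeg (Q : Level2Tree) (f : List ℕ → Ordinal) (v : Ordinal)
    (q : List (List ℕ)) : List (Ordinal × Option (List ℕ)) :=
  Q.oplus f q ++ [(v, none)]

def optNodeLt : Option (List ℕ) → Option (List ℕ) → Prop
  | none, some _ => True
  | some s, some t => BKlt s t
  | _, _ => False

def entryLt (x y : Ordinal × Option (List ℕ)) : Prop :=
  x.1 < y.1 ∨ (x.1 = y.1 ∧ optNodeLt x.2 y.2)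

/-- The order `<^{²Q}` on interleaved sequences. -/
def Rep2lt : List (Ordinal × Option (List ℕ)) → List (Ordinal × Option (List ℕ)) → Prop :=
  BKltBy entryLt

/-- `rep(²Q)`. -/
def Level2Tree.rep (Q : Level2Tree) : Set (List (Ordinal × Option (List ℕ))) :=
  {x | (∃ q ∈ Q.dom, ∃ f, Respects1 (Q.tr q) f ∧ x = Q.oplus f q) ∨
       (∃ q ∈ Q.dom, ∃ f v, RespectsP1 (Q.tr q) (Q.nd q) f v ∧ x = Q.oplusNeg f v q)}

/-- Π¹₂-wellfoundedness of a level-2 tree. -/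
def Level2Tree.Pi12WF (Q : Level2Tree) : Prop :=
  (∀ q ∈ Q.dom, Pi11WF {a : List ℕ | q ++ [a] ∈ Q.dom}) ∧
  ∀ y : ℕ → List ℕ, (∀ n : ℕ, (List.ofFn fun i : Fin n => y i) ∈ Q.dom) →
    ¬ Pi11WF (⋃ n : ℕ, Q.tr (List.ofFn fun i : Fin n => y i))

/-- The type of elements of `rep(Q)` for a level ≤2 tree `Q`: `inl` for the level-1
part, `inr` for the level-2 part. -/
abbrev RepLe2Elt := (List ℕ × Option ℕ) ⊕ (List (Ordinal × Option (List ℕ)))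

/-- `rep(Q)` for the level ≤2 tree `Q = (P, Q₂)`. -/
def RepLe2 (P : Set (List ℕ)) (Q : Level2Tree) : Set RepLe2Elt :=
  {x | match x with
       | Sum.inl a => a ∈ Rep1 P
       | Sum.inr b => b ∈ Q.rep}

/-- The order `<^Q` for a level ≤2 tree: the level-1 part comes first. -/
def RepLe2lt : RepLe2Elt → RepLe2Elt → Prop := Sum.Lex Rep1lt Rep2lt

/-- Π¹₂-wellfoundedness of a level ≤2 tree. -/
def Pi12WFle2 (P : Set (List ℕ)) (Q : Level2Tree) : Prop :=
  Pi11WF P ∧ Q.Pi12WF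

/-- The sequence of the first `n` values of `x`. -/
def prefixSeq {α : Type*} (x : ℕ → α) (n : ℕ) : List α := List.ofFn fun i : Fin n => x i

/-- `σ` is a winning strategy for Player I (who plays at even rounds) in the game
with payoff set `A`. -/
def WinningStratI (A : Set (ℕ → ℕ)) (σ : List ℕ → ℕ) : Prop :=
  ∀ x : ℕ → ℕ, (∀ n, x (2 * n) = σ (prefixSeq x (2 * n))) → x ∈ A

/-- `σ` is a winning strategy for Player II (who plays at odd rounds). -/
def WinningStratII (A : Set (ℕ → ℕ)) (σ : List ℕ → ℕ) : Prop :=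
  ∀ x : ℕ → ℕ, (∀ n, x (2 * n + 1) = σ (prefixSeq x (2 * n + 1))) → x ∉ A

/-- The Gale–Stewart game with payoff `A` is determined. -/
def GameDetermined (A : Set (ℕ → ℕ)) : Prop :=
  (∃ σ, WinningStratI A σ) ∨ (∃ σ, WinningStratII A σ)

/-- `A` is analytic: the projection of a closed subset of the plane of Baire space,
i.e., the projection of the set of branches of a set of pairs of finite sequences. -/
def IsAnalytic (A : Set (ℕ → ℕ)) : Prop :=
  ∃ T : Set (List ℕ × List ℕ),
    A = {x | ∃ y : ℕ → ℕ, ∀ n : ℕ, (prefixSeq x n, prefixSeq y n) ∈ T}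

/-- Boldface Π¹₁-determinacy: every game with coanalytic payoff is determined. -/
def BoldfacePi11Determinacy : Prop :=
  ∀ A : Set (ℕ → ℕ), IsAnalytic Aᶜ → GameDetermined A

/-- An infinite level-1 tower. -/
def IsInfLevel1Tower (P : ℕ → Set (List ℕ)) : Prop :=
  ∀ i : ℕ, IsLevel1Tree (P i) ∧ (P i).Finite ∧ (P i).ncard = i ∧
    ∀ j : ℕ, i < j → P i ⊆ P j

/-- `o` is a limit point of the set of ordinals `E`. -/
def IsLimitPtOf (E : Set Ordinal) (o : Ordinal) : Prop :=
  (∃ e ∈ E, e < o) ∧ ∀ b < o, ∃ e ∈ E, b < e ∧ e < o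

/-- `E` is a club in `ω₁`. -/
def IsClubInOmega1 (E : Set Ordinal) : Prop :=
  (∀ o ∈ E, o < omega1) ∧
  (∀ o < omega1, ∃ e ∈ E, o < e) ∧
  ∀ o < omega1, IsLimitPtOf E o → o ∈ E

/-- The tuple coded by `f` lies in `[E]^{P↑}`. -/
def RespectsIn (E : Set Ordinal) (P : Set (List ℕ)) (f : List ℕ → Ordinal) : Prop :=
  Respects1 P f ∧ ∀ p ∈ P, f p ∈ E ∧ IsLimitPtOf E (f p)

/-- The tuple coded by `(f, v)` lies in `[E]^{(P,t)↑}`. -/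
def RespectsPIn (E : Set Ordinal) (P : Set (List ℕ)) (t : Option (List ℕ))
    (f : List ℕ → Ordinal) (v : Ordinal) : Prop :=
  RespectsP1 P t f v ∧ (∀ p ∈ P, f p ∈ E ∧ IsLimitPtOf E (f p)) ∧
  (t ≠ none → v ∈ E)

/-- `rep(²Q) ↾ E`. -/
def Level2Tree.repRestrict (Q : Level2Tree) (E : Set Ordinal) :
    Set (List (Ordinal × Option (List ℕ))) :=
  {x | (∃ q ∈ Q.dom, ∃ f, RespectsIn E (Q.tr q) f ∧ x = Q.oplus f q) ∨
       (∃ q ∈ Q.dom, ∃ f v, RespectsPIn E (Q.tr q) (Q.nd q) f v ∧ x = Q.oplusNeg f v q)}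

/-- `rep(Q) ↾ E` for a level ≤2 tree `Q = (P, Q₂)`. -/
def RepLe2Restrict (P : Set (List ℕ)) (Q : Level2Tree) (E : Set Ordinal) :
    Set RepLe2Elt :=
  {x | match x with
       | Sum.inl a => a ∈ Rep1 P
       | Sum.inr b => b ∈ Q.repRestrict E}

/-- `C` is a closed subset of `X` in the order topology of the strict linear order
`lt` on `X`: `C` contains all of its one-sided limit points in `X`. -/
def OrderClosedIn {σ : Type*} (lt : σ → σ → Prop) (X C : Set σ) : Prop :=
  (∀ v ∈ X, (∃ w ∈ C, lt w v) →
      (∀ w ∈ X, lt w v → ∃ u ∈ C, lt w u ∧ lt u v) → v ∈ C) ∧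
  (∀ v ∈ X, (∃ w ∈ C, lt v w) →
      (∀ w ∈ X, lt v w → ∃ u ∈ C, lt v u ∧ lt u w) → v ∈ C)

end

/-!
`rep(P)` is the lexicographic product of `(P, <_BK)` with `ω + 1`, so its order type is
`(ω + 1) · type(P, <_BK)`, and left multiplication by a nonzero ordinal is strictly monotone.
Thus the comparison reduces to `type(P, <_BK) < type(W, <_BK)`, i.e. to an order embedding of
`P` into some initial segment `{q ∈ W | q <_BK w}`. Such an embedding extends by `∅ ↦ ∅` to a
map factoring `(P, W)` because `∅` is `<_BK`-greatest.
-/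

universe u

theorem Ordinal.type_lt_iff_exists_bounded_embedding {α β : Type u} {r : α → α → Prop}
    {s : β → β → Prop} [IsWellOrder α r] [IsWellOrder β s] :
    type r < type s ↔ ∃ f : α → β, ∃ b, (∀ a a', r a a' → s (f a) (f a')) ∧ ∀ a, s (f a) b := by
  constructor
  · rintro ⟨f⟩
    exact ⟨f, f.top, fun a a' => f.map_rel_iff.2, f.lt_top⟩
  · rintro ⟨f, b, hf, hb⟩
    let g : r ↪r Subrel s (s · b) := RelEmbedding.ofMonotone (fun a => ⟨f a, hb a⟩) hf
    calc type r ≤ type (Subrel s (s · b)) := g.ordinal_type_le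
      _ = typein s b := type_subrel s b
      _ < type s := typein_lt_type s b

theorem optNatLt_iff_lt {a b : Option ℕ} : optNatLt a b ↔ @LT.lt (WithTop ℕ) _ a b := by
  rcases a with _ | a <;> rcases b with _ | b <;>
    simp [optNatLt, WithTop.none_eq_top, WithTop.some_eq_coe]

section Rep1

variable (P : Set (List ℕ))

def rep1RelIso :
    (fun a b : {x // x ∈ Rep1 P} => Rep1lt a.1 b.1) ≃r
      Prod.Lex (Subrel BKlt (· ∈ P)) (· < · : WithTop ℕ → WithTop ℕ → Prop) where
  toFun x := (⟨x.1.1, x.2⟩, x.1.2)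
  invFun y := ⟨(y.1.1, y.2), y.1.2⟩
  map_rel_iff' {x y} := by
    simp only [Equiv.coe_fn_mk, Prod.lex_def, Subrel, Order.Preimage, Rep1lt, Subtype.ext_iff,
      optNatLt_iff_lt]

def subrelBKltEmbeddingRep1 :
    Subrel BKlt (· ∈ P) ↪r (fun a b : {x // x ∈ Rep1 P} => Rep1lt a.1 b.1) where
  toFun p := ⟨(p.1, none), p.2⟩
  inj' p q h := Subtype.ext (congrArg (·.1.1) h)
  map_rel_iff' {p q} := by
    change Rep1lt (p.1, none) (q.1, none) ↔ BKlt p.1 q.1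
    simp [Rep1lt, optNatLt]

theorem isWellOrder_subrel_bklt [IsWellOrder {x // x ∈ Rep1 P} (fun a b => Rep1lt a.1 b.1)] :
    IsWellOrder {p // p ∈ P} (Subrel BKlt (· ∈ P)) :=
  (subrelBKltEmbeddingRep1 P).isWellOrder

theorem type_rep1lt [IsWellOrder {x // x ∈ Rep1 P} (fun a b => Rep1lt a.1 b.1)]
    [IsWellOrder {p // p ∈ P} (Subrel BKlt (· ∈ P))] :
    Ordinal.type (fun a b : {x // x ∈ Rep1 P} => Rep1lt a.1 b.1) =
      Ordinal.type (α := WithTop ℕ) (· < ·) * Ordinal.type (Subrel BKlt (· ∈ P)) := by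
  rw [(rep1RelIso P).ordinalType_congr, Ordinal.type_prod_lex]

end Rep1

theorem BKlt.ne_nil {s t : List ℕ} (h : BKlt s t) : s ≠ [] := by
  rintro rfl
  exact h

theorem BKlt_nil_of_ne_nil : ∀ {s : List ℕ}, s ≠ [] → BKlt s []
  | _ :: _, _ => trivial

section Factors

variable {P W : Set (List ℕ)}

theorem Factors.exists_bounded_embedding {σ : List ℕ → List ℕ} (hσ : Factors P W σ)
    {w : List ℕ} (hw : w ∈ W) (hbound : ∀ p ∈ P, BKlt (σ p) w) :
    ∃ f : {p // p ∈ P} → {q // q ∈ W}, ∃ b : {q // q ∈ W},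
      (∀ a a', BKlt a.1 a'.1 → BKlt (f a).1 (f a').1) ∧ ∀ a, BKlt (f a).1 b.1 := by
  have hσW (p : List ℕ) (hp : p ∈ P) : σ p ∈ W :=
    (hσ.2.1 p hp).resolve_left (hbound p hp).ne_nil
  refine ⟨fun p => ⟨σ p, hσW p.1 p.2⟩, ⟨w, hw⟩, fun a a' h => ?_, fun a => hbound a.1 a.2⟩
  exact hσ.2.2 _ (Set.mem_insert_of_mem _ a.2) _ (Set.mem_insert_of_mem _ a'.2) h

theorem exists_factors_of_bounded_embedding (hP : ∀ p ∈ P, p ≠ [])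
    (f : {p // p ∈ P} → {q // q ∈ W}) (b : {q // q ∈ W})
    (hf : ∀ a a', BKlt a.1 a'.1 → BKlt (f a).1 (f a').1) (hb : ∀ a, BKlt (f a).1 b.1) :
    ∃ σ : List ℕ → List ℕ, ∃ w ∈ W, Factors P W σ ∧ ∀ p ∈ P, BKlt (σ p) w := by
  classical
  have hnil : [] ∉ P := fun h => hP [] h rfl
  refine ⟨fun p => if hp : p ∈ P then (f ⟨p, hp⟩).1 else [], b.1, b.2,
    ⟨dif_neg hnil, fun p hp => ?_, ?_⟩, fun p hp => ?_⟩
  · simp only [dif_pos hp]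
    exact Set.mem_insert_of_mem _ (f ⟨p, hp⟩).2
  · rintro s (rfl | hs) t (rfl | ht) hst
    · exact hst.elim
    · exact hst.elim
    · simp only [dif_pos hs, dif_neg hnil]
      exact BKlt_nil_of_ne_nil (hb ⟨s, hs⟩).ne_nil
    · simp only [dif_pos hs, dif_pos ht]
      exact hf ⟨s, hs⟩ ⟨t, ht⟩ hst
  · simp only [dif_pos hp]
    exact hb ⟨p, hp⟩

end Factors

theorem stmt5_general (P W : Set (List ℕ)) (hP : IsLevel1Tree P)
    (h1 : IsWellOrder {x // x ∈ Rep1 P} (fun a b => Rep1lt a.1 b.1))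
    (h2 : IsWellOrder {x // x ∈ Rep1 W} (fun a b => Rep1lt a.1 b.1)) :
    @Ordinal.type {x // x ∈ Rep1 P} (fun a b => Rep1lt a.1 b.1) h1 <
      @Ordinal.type {x // x ∈ Rep1 W} (fun a b => Rep1lt a.1 b.1) h2 ↔
    ∃ σ : List ℕ → List ℕ, ∃ w ∈ W, Factors P W σ ∧ ∀ p ∈ P, BKlt (σ p) w := by
  have := isWellOrder_subrel_bklt P
  have := isWellOrder_subrel_bklt W
  have hω : 0 < Ordinal.type (α := WithTop ℕ) (· < ·) :=
    pos_iff_ne_zero.2 (Ordinal.type_ne_zero_of_nonempty _)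
  rw [type_rep1lt P, type_rep1lt W, mul_lt_mul_iff_right₀ hω,
    Ordinal.type_lt_iff_exists_bounded_embedding]
  constructor
  · rintro ⟨f, b, hf, hb⟩
    exact exists_factors_of_bounded_embedding hP.1 f b hf hb
  · rintro ⟨σ, w, hw, hσ, hbound⟩
    exact hσ.exists_bounded_embedding hw hbound

/-- For Π¹₁-wellfounded level-1 trees `P`, `W`, the order type of
`(rep(P), <^P)` is strictly less than that of `(rep(W), <^W)` iff there are `σ`
factoring `(P, W)` and `w ∈ W` with `σ(p) <_BK w` for every `p ∈ P`. -/
theorem stmt5 (P W : Set (List ℕ)) (hP : IsLevel1Tree P) (hW : IsLevel1Tree W)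
    (hPwf : Pi11WF P) (hWwf : Pi11WF W)
    (h1 : IsWellOrder {x // x ∈ Rep1 P} (fun a b => Rep1lt a.1 b.1))
    (h2 : IsWellOrder {x // x ∈ Rep1 W} (fun a b => Rep1lt a.1 b.1)) :
    @Ordinal.type {x // x ∈ Rep1 P} (fun a b => Rep1lt a.1 b.1) h1 <
      @Ordinal.type {x // x ∈ Rep1 W} (fun a b => Rep1lt a.1 b.1) h2 ↔
    ∃ σ : List ℕ → List ℕ, ∃ w ∈ W, Factors P W σ ∧ ∀ p ∈ P, BKlt (σ p) w :=
  stmt5_general P W hP h1 h2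
end

section
/- An infinite sequence P⃗ = (P_i)_{1≤i<ω} of sets of finite sequences of natural numbers belongs to p[S₁] if and only if, setting P₀ = ∅, P⃗ is an infinite regular level-1 tower and the level-1 tree ∪_i P_i is Π¹₁-wellfounded. -/
/-- The condition for `((P_i)_{1≤i≤n}, (a_i)_{1≤i≤n})` (with `P 0 = ∅`) to be a node
of the tree `S₁`. -/
def S1Node (P : ℕ → Set (List ℕ)) (a : ℕ → Ordinal) (n : ℕ) : Prop :=
  (∀ i ≤ n, IsLevel1Tree (P i) ∧ Regular1 (P i) ∧ (P i).Finite ∧ (P i).ncard = i) ∧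
  (∀ i j, i ≤ n → j ≤ n → i < j → P i ⊆ P j) ∧
  ∃ g : List ℕ → Ordinal,
    (∀ i < n, ∀ p ∈ P (i + 1) \ P i, g p = a (i + 1)) ∧ Respects1 (P n) g

/-!
A branch of `S₁` attaches to every element of `⋃ Pᵢ` the ordinal chosen when it entered the
tower, and this assignment is order preserving for the Brouwer–Kleene order. An infinite branch
`x` through `⋃ Pᵢ` would give the Brouwer–Kleene descending sequence `x↾1 > x↾2 > ⋯`, hence a
descending sequence of ordinals.

Conversely, the Brouwer–Kleene order on a wellfounded tree is wellfounded, so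
`q ↦ ω · (rank q + 1)` is an order preserving assignment of countable limit ordinals to
`⋃ Pᵢ`; reading it off at the node added at each stage gives a branch of `S₁`.
-/

universe u

open Ordinal

section BrouwerKleene

variable {α : Type*}

theorem bkLtBy_append_self {lt : α → α → Prop} :
    ∀ (s : List α) {u : List α}, u ≠ [] → BKltBy lt (s ++ u) s
  | [], [], hu => absurd rfl hu
  | [], _ :: _, _ => trivial
  | _ :: s, _, hu => Or.inr ⟨rfl, bkLtBy_append_self s hu⟩

theorem bkLtBy_irrefl {lt : α → α → Prop} [Std.Irrefl lt] : ∀ s : List α, ¬ BKltBy lt s s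
  | [] => id
  | a :: s => fun h => h.elim (irrefl a) fun h => bkLtBy_irrefl s h.2

theorem exists_append_singleton_prefix {s t : List α} (h : s <+: t) (hne : s ≠ t) :
    ∃ a, s ++ [a] <+: t := by
  obtain ⟨_ | ⟨a, u⟩, rfl⟩ := h
  · exact absurd (List.append_nil s).symm hne
  · exact ⟨a, u, by simp⟩

theorem mem_of_prefix_of_parent_mem {T : Set (List α)}
    (hT : ∀ s a, s ++ [a] ∈ T → s ≠ [] → s ∈ T) {s t : List α} (ht : t ∈ T) (hst : s <+: t)
    (hs : s ≠ []) : s ∈ T := by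
  induction t using List.reverseRecOn with
  | nil => exact absurd (List.prefix_nil.mp hst) hs
  | append_singleton t a ih =>
    rcases List.prefix_concat_iff.mp hst with rfl | hst
    · exact ht
    · refine ih (hT t a ht ?_) hst
      rintro rfl
      exact hs (List.prefix_nil.mp hst)

end BrouwerKleene

theorem bkLt_concat_cases :
    ∀ (s t : List ℕ) (m : ℕ), BKlt t (s ++ [m]) → ¬ s ++ [m] <+: t →
      (∃ m' < m, s ++ [m'] <+: t) ∨ (BKlt t s ∧ ¬ s <+: t)
  | _, [], _, h, _ => h.elim
  | [], a :: t, m, h, hpre => by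
    rcases h with h | ⟨rfl, _⟩
    · exact Or.inl ⟨a, h, t, rfl⟩
    · exact absurd ⟨t, rfl⟩ hpre
  | b :: s, a :: t, m, h, hpre => by
    rcases h with h | ⟨rfl, h⟩
    · exact Or.inr ⟨Or.inl h, fun hp => h.ne (List.cons_prefix_cons.mp hp).1.symm⟩
    · have hpre : ¬ s ++ [m] <+: t := fun hp => hpre (List.cons_prefix_cons.mpr ⟨rfl, hp⟩)
      rcases bkLt_concat_cases s t m h hpre with ⟨m', hm', hp⟩ | ⟨hlt, hnp⟩
      · exact Or.inl ⟨m', hm', List.cons_prefix_cons.mpr ⟨rfl, hp⟩⟩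
      · exact Or.inr ⟨Or.inr ⟨rfl, hlt⟩, fun hp => hnp (List.cons_prefix_cons.mp hp).2⟩

theorem exists_prefixSeq_eq_take {α : Type*} {f : ℕ → List α} (hf : ∀ n, f n <+: f (n + 1))
    (hlen : ∀ n, n ≤ (f n).length) : ∃ x : ℕ → α, ∀ n, prefixSeq x n = (f n).take n := by
  have hchain : ∀ i j, i ≤ j → f i <+: f j := fun i j hij => by
    induction hij with
    | refl => exact List.prefix_rfl
    | step _ ih => exact ih.trans (hf _)
  refine ⟨fun i => (f (i + 1))[i]'(hlen (i + 1)), fun n => ?_⟩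
  refine List.ext_getElem (by simp [prefixSeq, hlen n]) fun i hi _ => ?_
  simp only [prefixSeq, List.getElem_ofFn, List.getElem_take]
  exact (hchain (i + 1) n (by simpa [prefixSeq] using hi)).getElem _

theorem prefixSeq_succ {α : Type*} {x : ℕ → α} (n : ℕ) :
    prefixSeq x (n + 1) = prefixSeq x n ++ [x n] := by
  rw [prefixSeq, List.ofFn_succ', List.concat_eq_append]
  rfl

def IsChildIn (T : Set (List ℕ)) (u v : List ℕ) : Prop := u ∈ T ∧ ∃ m, u = v ++ [m]

def BKltOn (T : Set (List ℕ)) (u v : List ℕ) : Prop := u ∈ T ∧ v ∈ T ∧ BKlt u v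

section KleeneBrouwer

variable {T : Set (List ℕ)}

theorem wellFounded_isChildIn (hT : ∀ s a, s ++ [a] ∈ T → s ≠ [] → s ∈ T) (hwf : Pi11WF T) :
    WellFounded (IsChildIn T) := by
  refine wellFounded_iff_isEmpty_descending_chain.mpr ⟨fun ⟨f, hf⟩ => hwf ?_⟩
  choose m hm using fun n => (hf n).2
  have hlen : ∀ n, n ≤ (f n).length := fun n => by
    induction n with
    | zero => exact Nat.zero_le _
    | succ n ih => simpa [hm n] using ih
  obtain ⟨x, hx⟩ := exists_prefixSeq_eq_take (fun n => ⟨[m n], (hm n).symm⟩) hlen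
  refine ⟨x, fun n hn => ?_⟩
  obtain ⟨k, rfl⟩ := Nat.exists_eq_succ_of_ne_zero hn.ne'
  change prefixSeq x (k + 1) ∈ T
  rw [hx]
  refine mem_of_prefix_of_parent_mem hT (hf k).1 (List.take_prefix _ _) ?_
  rw [← List.length_pos_iff, List.length_take]
  exact lt_min hn (hn.trans_le (hlen _))

/-- Induction on `s` along the child relation, and for the children `s ++ [m]` on `m`: a node
left of `s ++ [m]` is left of `s` or extends some `s ++ [m']` with `m' < m`. -/
theorem acc_bkLtOn_of_prefix (hT : ∀ s a, s ++ [a] ∈ T → s ≠ [] → s ∈ T) (hwf : Pi11WF T)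
    (s : List ℕ) (hleft : ∀ t ∈ T, BKlt t s → ¬ s <+: t → Acc (BKltOn T) t) :
    ∀ t ∈ T, s <+: t → Acc (BKltOn T) t := by
  induction s using (wellFounded_isChildIn hT hwf).induction with
  | _ s ih =>
  have hchild : ∀ m, ∀ t ∈ T, s ++ [m] <+: t → Acc (BKltOn T) t := by
    intro m
    induction m using Nat.strong_induction_on with
    | _ m ihm =>
    intro t ht hst
    have hsm : s ++ [m] ∈ T := mem_of_prefix_of_parent_mem hT ht hst (by simp)
    refine ih _ ⟨hsm, m, rfl⟩ (fun u hu hlt hnp => ?_) t ht hst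
    rcases bkLt_concat_cases s u m hlt hnp with ⟨m', hm', hpre⟩ | ⟨hlt, hnp⟩
    · exact ihm m' hm' u hu hpre
    · exact hleft u hu hlt hnp
  intro t ht hst
  by_cases hts : s = t
  · subst hts
    refine ⟨s, fun u ⟨hu, _, hlt⟩ => ?_⟩
    by_cases hpre : s <+: u
    · have hne : s ≠ u := by rintro rfl; exact bkLtBy_irrefl s hlt
      obtain ⟨m, hm⟩ := exists_append_singleton_prefix hpre hne
      exact hchild m u hu hm
    · exact hleft u hu hlt hpre
  · obtain ⟨m, hm⟩ := exists_append_singleton_prefix hst hts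
    exact hchild m t ht hm

theorem wellFounded_bkLtOn (hT : ∀ s a, s ++ [a] ∈ T → s ≠ [] → s ∈ T) (hwf : Pi11WF T) :
    WellFounded (BKltOn T) := by
  refine ⟨fun t => ?_⟩
  by_cases ht : t ∈ T
  · exact acc_bkLtOn_of_prefix hT hwf [] (fun _ _ _ hnp => absurd List.nil_prefix hnp) t ht
      List.nil_prefix
  · exact ⟨t, fun u hu => absurd hu.2.1 ht⟩

theorem pi11WF_of_wellFounded_bkLtOn (h : WellFounded (BKltOn T)) : Pi11WF T := by
  rintro ⟨x, hx⟩
  refine wellFounded_iff_isEmpty_descending_chain.mp h |>.false ⟨fun n => prefixSeq x (n + 1),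
    fun n => ⟨hx _ (by omega), hx _ (by omega), ?_⟩⟩
  change BKlt (prefixSeq x (n + 1 + 1)) _
  rw [prefixSeq_succ (n + 1)]
  exact bkLtBy_append_self _ (List.cons_ne_nil _ _)

end KleeneBrouwer

section CountableRank

open Cardinal

theorem omega1_eq_omega_one : omega1.{u} = ω₁ := ord_aleph 1

theorem rank_lt_omega_one {α : Type*} [Countable α] (r : α → α → Prop) [IsWellFounded α r]
    (a : α) : IsWellFounded.rank r a < ω₁ := by
  induction a using IsWellFounded.induction r with
  | _ a ih =>
  rw [IsWellFounded.rank_eq]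
  exact iSup_lt_omega_one fun b => (isSuccLimit_omega 1).succ_lt (ih b b.2)

theorem exists_strictMono_countable_limit {α : Type} [Countable α] {r : α → α → Prop}
    (hr : WellFounded r) : ∃ f : α → Ordinal.{u},
      (∀ a, f a < omega1 ∧ Order.IsSuccLimit (f a)) ∧ ∀ a b, r a b → f a < f b := by
  have : IsWellFounded α r := ⟨hr⟩
  refine ⟨fun a => lift.{u} (ω * Order.succ (IsWellFounded.rank r a)), fun a => ⟨?_, ?_⟩,
    fun a b h => ?_⟩
  · rw [omega1_eq_omega_one, lift_lt_omega_one]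
    exact (isInitial_omega 1).isPrincipal_mul (omega0_le_omega 1) omega0_lt_omega_one
      ((isSuccLimit_omega 1).succ_lt (rank_lt_omega_one r a))
  · exact isSuccLimit_lift.mpr (isSuccLimit_mul_left isSuccLimit_omega0 (Order.bot_lt_succ _))
  · exact lift_lt.mpr ((mul_lt_mul_iff_right₀ omega0_pos).mpr
      (Order.succ_lt_succ (IsWellFounded.rank_lt_of_rel h)))

end CountableRank

theorem Set.exists_sdiff_eq_singleton_of_ncard_eq_succ {α : Type*} {s t : Set α} (hst : s ⊆ t)
    (hs : s.Finite) (h : t.ncard = s.ncard + 1) : ∃ a, t \ s = {a} := by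
  rw [← Set.ncard_eq_one, Set.ncard_sdiff hst hs, h, Nat.add_sub_cancel_left]

theorem exists_mem_sdiff_of_mem_iUnion {α : Type*} {P : ℕ → Set α} (h0 : P 0 = ∅) {q : α}
    (hq : q ∈ ⋃ i, P i) : ∃ i, q ∈ P (i + 1) \ P i := by
  classical
  have hex : ∃ i, q ∈ P i := Set.mem_iUnion.mp hq
  obtain ⟨i, hi⟩ : ∃ i, Nat.find hex = i + 1 := by
    refine Nat.exists_eq_succ_of_ne_zero fun h => ?_
    simpa [h, h0] using Nat.find_spec hex
  exact ⟨i, hi ▸ Nat.find_spec hex, Nat.find_min hex (by omega)⟩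

theorem mem_iUnion_of_append_singleton_mem {ι : Type*} {P : ι → Set (List ℕ)}
    (hP : ∀ i, IsLevel1Tree (P i)) (s : List ℕ) (a : ℕ) (h : s ++ [a] ∈ ⋃ i, P i)
    (hs : s ≠ []) : s ∈ ⋃ i, P i := by
  obtain ⟨i, hi⟩ := Set.mem_iUnion.mp h
  exact Set.mem_iUnion.mpr ⟨i, ((hP i).2 s a hi).1 hs⟩

theorem Respects1.mono {P Q : Set (List ℕ)} {f : List ℕ → Ordinal} (h : Respects1 Q f)
    (hPQ : P ⊆ Q) : Respects1 P f :=
  ⟨fun p hp => h.1 p (hPQ hp), fun p hp q hq => h.2 p (hPQ hp) q (hPQ hq)⟩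

def IsRegularLevel1Tower (P : ℕ → Set (List ℕ)) : Prop :=
  ∀ i : ℕ, IsLevel1Tree (P i) ∧ Regular1 (P i) ∧ (P i).Finite ∧
    (P i).ncard = i ∧ ∀ j : ℕ, i < j → P i ⊆ P j

section S1

variable {P : ℕ → Set (List ℕ)} {a : ℕ → Ordinal}

theorem isRegularLevel1Tower_of_S1Node (ha : ∀ n, S1Node P a n) : IsRegularLevel1Tower P := by
  intro i
  obtain ⟨htree, hreg, hfin, hcard⟩ := (ha i).1 i le_rfl
  exact ⟨htree, hreg, hfin, hcard, fun j hij => (ha j).2.1 i j hij.le le_rfl hij⟩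

/-- Every later node of the branch attaches `a (i + 1)` to the element added at stage `i + 1`. -/
theorem S1Node.lt_of_bkLt (ha : ∀ n, S1Node P a n) {p q : List ℕ} {i j : ℕ}
    (hp : p ∈ P (i + 1) \ P i) (hq : q ∈ P (j + 1) \ P j) (h : BKlt p q) :
    a (i + 1) < a (j + 1) := by
  obtain ⟨-, hsub, g, hg, -, hgmono⟩ := ha (i + j + 2)
  have := hgmono p (hsub _ _ (by omega) le_rfl (by omega) hp.1)
    q (hsub _ _ (by omega) le_rfl (by omega) hq.1) h
  rwa [hg i (by omega) p hp, hg j (by omega) q hq] at this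

theorem wellFounded_bkLtOn_iUnion_of_S1Node (h0 : P 0 = ∅) (ha : ∀ n, S1Node P a n) :
    WellFounded (BKltOn (⋃ i, P i)) := by
  refine wellFounded_iff_isEmpty_descending_chain.mpr ⟨fun ⟨t, ht⟩ => ?_⟩
  choose s hs using fun n => exists_mem_sdiff_of_mem_iUnion h0 (ht n).2.1
  exact not_strictAnti_of_wellFoundedLT (fun n => a (s n + 1))
    (strictAnti_nat_of_succ_lt fun n => S1Node.lt_of_bkLt ha (hs (n + 1)) (hs n) (ht n).2.2)

theorem exists_S1Node_of_respects1_iUnion (hP : IsRegularLevel1Tower P)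
    {f : List ℕ → Ordinal.{u}} (hf : Respects1 (⋃ i, P i) f) :
    ∃ a : ℕ → Ordinal.{u}, ∀ n, S1Node P a n := by
  have hstep : ∀ i, ∃ q, P (i + 1) \ P i = {q} := fun i => by
    obtain ⟨-, -, hfin, hcard, hsub⟩ := hP i
    exact Set.exists_sdiff_eq_singleton_of_ncard_eq_succ (hsub _ i.lt_succ_self) hfin
      (by rw [hcard, (hP (i + 1)).2.2.2.1])
  choose p hp using hstep
  refine ⟨fun k => f (p (k - 1)), fun n => ⟨fun i _ => ?_, fun i j _ _ hij => (hP i).2.2.2.2 j hij,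
    f, fun i _ q hq => ?_, hf.mono (Set.subset_iUnion P n)⟩⟩
  · obtain ⟨htree, hreg, hfin, hcard, -⟩ := hP i
    exact ⟨htree, hreg, hfin, hcard⟩
  · rw [hp i, Set.mem_singleton_iff] at hq
    simp only [hq, Nat.add_sub_cancel]

end S1

/-- `(P_i)_{1≤i<ω} ∈ p[S₁]` iff, setting `P₀ = ∅`, it is an infinite
regular level-1 tower whose union is Π¹₁-wellfounded. -/
theorem stmt9 (P : ℕ → Set (List ℕ)) (h0 : P 0 = ∅) :
    (∃ a : ℕ → Ordinal, ∀ n : ℕ, S1Node P a n) ↔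
      ((∀ i : ℕ, IsLevel1Tree (P i) ∧ Regular1 (P i) ∧ (P i).Finite ∧
          (P i).ncard = i ∧ ∀ j : ℕ, i < j → P i ⊆ P j) ∧
        Pi11WF (⋃ i, P i)) := by
  constructor
  · rintro ⟨a, ha⟩
    exact ⟨isRegularLevel1Tower_of_S1Node ha,
      pi11WF_of_wellFounded_bkLtOn (wellFounded_bkLtOn_iUnion_of_S1Node h0 ha)⟩
  · rintro ⟨hP, hwf⟩
    have hparent := mem_iUnion_of_append_singleton_mem fun i => (hP i).1
    obtain ⟨f, hlim, hmono⟩ := exists_strictMono_countable_limit (wellFounded_bkLtOn hparent hwf)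
    exact exists_S1Node_of_respects1_iUnion hP
      ⟨fun p _ => hlim p, fun p hp q hq h => hmono p q ⟨hp, hq, h⟩⟩
end

section
/- Assume boldface Π¹₁-determinacy. Let Q be a level-2 tree, let q ∈ dom(Q), and let ᾱ be a tuple respecting Q_tree(q) such that every entry of ᾱ is additively closed (closed under ordinal addition) and greater than ω. Then ᾱ ⊕ q is the least upper bound in (rep(Q), <^Q) of the nonempty set of all elements ᾱ′ ⊕ q⌢(−1) ∈ rep(Q), where ᾱ′ ranges over the tuples respecting Q(q) that agree with ᾱ on Q_tree(q). -/
/-- The set of all elements `ᾱ' ⊕ q⌢(-1)` of `rep(Q)` where `ᾱ'` ranges over the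
tuples respecting `Q(q)` that agree with the tuple coded by `f` on `Q_tree(q)`. -/
def sideSet (Q : Level2Tree) (f : List ℕ → Ordinal) (q : List (List ℕ)) :
    Set (List (Ordinal × Option (List ℕ))) :=
  {x | ∃ f' v, RespectsP1 (Q.tr q) (Q.nd q) f' v ∧
      (∀ p ∈ Q.tr q, f' p = f p) ∧ x = Q.oplusNeg f' v q}

/-! `ᾱ ⊕ q` is an upper bound since every `ᾱ ⊕ q⌢(-1)` extends it. Any `z <^Q ᾱ ⊕ q`
in `rep(Q)` either branches off `ᾱ ⊕ q` to the left, and then lies below every element of the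
nonempty side set, or properly extends it. In the latter case the entry of `z` right after
`ᾱ ⊕ q` is an admissible value `β` at the node `Q_node(q)`, and `β + ω` (or `β + 1` when
`Q_node(q) = -1`) is again admissible, because the entries of `ᾱ` above the node are additively
closed and greater than `ω`; the corresponding side element lies above `z`. -/

section BKltBy

variable {α : Type*} {lt : α → α → Prop} {s t u : List α}

theorem bKltBy_iff_lex : BKltBy lt s t ↔ List.Lex (flip lt) t s := by
  induction s generalizing t with
  | nil => simp [BKltBy]
  | cons a s ih =>
    cases t with
    | nil => simp [BKltBy]
    | cons b t => simp [BKltBy, List.cons_lex_cons_iff, ih, flip, eq_comm]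

theorem BKltBy.asymm (h : ∀ a b, lt a b → ¬ lt b a) (hst : BKltBy lt s t) :
    ¬ BKltBy lt t s := by
  have : Std.Asymm (flip lt) := ⟨fun a b hab => h b a hab⟩
  rw [bKltBy_iff_lex] at hst ⊢
  exact Std.Asymm.asymm _ _ hst

theorem BKltBy.irrefl (h : ∀ a b, lt a b → ¬ lt b a) (s : List α) : ¬ BKltBy lt s s :=
  fun hs => hs.asymm h hs

theorem BKltBy.trans (h : ∀ a b c, lt a b → lt b c → lt a c) (hst : BKltBy lt s t)
    (htu : BKltBy lt t u) : BKltBy lt s u := by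
  rw [bKltBy_iff_lex] at *
  exact List.lex_trans (fun hxy hyz => h _ _ _ hyz hxy) htu hst

theorem bKltBy_trichotomous (h : ∀ a b, a = b ∨ lt a b ∨ lt b a) (s t : List α) :
    s = t ∨ BKltBy lt s t ∨ BKltBy lt t s := by
  have : Std.Trichotomous (flip lt) :=
    ⟨fun a b hab hba => (h a b).resolve_right (not_or.2 ⟨hba, hab⟩)⟩
  simp only [bKltBy_iff_lex]
  rcases Std.Trichotomous.rel_or_eq_or_rel_swap (r := List.Lex (flip lt)) (a := t) (b := s)
    with h' | h' | h'
  · exact Or.inr (Or.inl h')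
  · exact Or.inl h'.symm
  · exact Or.inr (Or.inr h')

theorem BKltBy.append_left (l : List α) (hst : BKltBy lt s t) : BKltBy lt (l ++ s) (l ++ t) := by
  rw [bKltBy_iff_lex] at *
  exact List.Lex.append_left (flip lt) hst l

theorem bKltBy_append_self (l : List α) (hs : s ≠ []) : BKltBy lt (l ++ s) l := by
  obtain ⟨a, s, rfl⟩ := List.exists_cons_of_ne_nil hs
  simpa using BKltBy.append_left (lt := lt) l (s := a :: s) (t := []) trivial

theorem BKltBy.append_of_not_prefix (hst : BKltBy lt s t) (hts : ¬ t <+: s) (u : List α) :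
    BKltBy lt s (t ++ u) := by
  induction s generalizing t with
  | nil => exact absurd hst id
  | cons a s ih =>
    cases t with
    | nil => exact absurd List.nil_prefix hts
    | cons b t =>
      rcases hst with hab | ⟨rfl, hst⟩
      · exact Or.inl hab
      · exact Or.inr ⟨rfl, ih hst fun h => hts (List.cons_prefix_cons.2 ⟨rfl, h⟩)⟩

end BKltBy

theorem optNodeLt_asymm : ∀ x y : Option (List ℕ), optNodeLt x y → ¬ optNodeLt y x := by
  rintro (_ | x) (_ | y) h h' <;> simp only [optNodeLt] at h h'
  exact BKltBy.asymm (fun _ _ => Nat.lt_asymm) h h'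

theorem optNodeLt_trichotomous :
    ∀ x y : Option (List ℕ), x = y ∨ optNodeLt x y ∨ optNodeLt y x := by
  rintro (_ | x) (_ | y)
  · exact Or.inl rfl
  · exact Or.inr (Or.inl trivial)
  · exact Or.inr (Or.inr trivial)
  · simp only [optNodeLt, Option.some.injEq]
    exact bKltBy_trichotomous (lt := (· < ·)) (fun a b => by omega) x y

theorem entryLt_asymm : ∀ x y : Ordinal × Option (List ℕ), entryLt x y → ¬ entryLt y x := by
  rintro ⟨a, x⟩ ⟨b, y⟩ (hab | ⟨rfl, hxy⟩) (hba | ⟨hba, hyx⟩)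
  · exact lt_asymm hab hba
  · exact hab.ne' hba
  · exact lt_irrefl _ hba
  · exact optNodeLt_asymm _ _ hxy hyx

theorem entryLt_trichotomous :
    ∀ x y : Ordinal × Option (List ℕ), x = y ∨ entryLt x y ∨ entryLt y x := by
  rintro ⟨a, x⟩ ⟨b, y⟩
  rcases lt_trichotomy a b with hab | rfl | hba
  · exact Or.inr (Or.inl (Or.inl hab))
  · rcases optNodeLt_trichotomous x y with rfl | hxy | hyx
    · exact Or.inl rfl
    · exact Or.inr (Or.inl (Or.inr ⟨rfl, hxy⟩))
    · exact Or.inr (Or.inr (Or.inr ⟨rfl, hyx⟩))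
  · exact Or.inr (Or.inr (Or.inl hba))

theorem omega0_lt_omega1 : Ordinal.omega0 < omega1 :=
  Cardinal.omega0_lt_ord.2 Cardinal.aleph0_lt_aleph_one

theorem isPrincipal_add_omega1 : Ordinal.IsPrincipal (· + ·) omega1 :=
  Ordinal.isPrincipal_add_ord (Cardinal.aleph0_le_aleph 1)

section Respects

variable {P P' : Set (List ℕ)} {f g : List ℕ → Ordinal}

theorem Respects1.mono_s11 (h : Respects1 P' f) (hPP' : P ⊆ P') : Respects1 P f :=
  ⟨fun p hp => h.1 p (hPP' hp), fun p hp r hr hpr => h.2 p (hPP' hp) r (hPP' hr) hpr⟩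

theorem Respects1.congr (h : Respects1 P f) (hfg : ∀ p ∈ P, f p = g p) : Respects1 P g := by
  refine ⟨fun p hp => hfg p hp ▸ h.1 p hp, fun p hp r hr hpr => ?_⟩
  rw [← hfg p hp, ← hfg r hr]
  exact h.2 p hp r hr hpr

theorem RespectsP1.congr {t : Option (List ℕ)} {v : Ordinal} (h : RespectsP1 P t f v)
    (hfg : ∀ p ∈ P, f p = g p) : RespectsP1 P t g v := by
  cases t with
  | none => exact ⟨h.1.congr hfg, h.2⟩
  | some s =>
    refine ⟨h.1.congr hfg, h.2.congr ?_⟩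
    rintro p (rfl | hp)
    · simp
    · split_ifs <;> simp [hfg p hp]

theorem RespectsP1.respects1 {t : Option (List ℕ)} {v : Ordinal} (h : RespectsP1 P t f v) :
    Respects1 P f := by
  cases t <;> exact h.1

theorem respectsP1_some_of_respects1_insert {s : List ℕ} (hg : Respects1 (insert s P) g)
    (hfg : ∀ p ∈ P, f p = g p) : RespectsP1 P (some s) f (g s) := by
  refine ⟨(hg.mono_s11 (Set.subset_insert s P)).congr fun p hp => (hfg p hp).symm, hg.congr ?_⟩
  rintro p (rfl | hp)
  · simp
  · split_ifs with hps
    · rw [hps]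
    · exact (hfg p hp).symm

/-- The witness is `max(γ, entries left of s) + ω`. -/
theorem exists_respects1_insert_gt {s : List ℕ} (hs : s ∉ P) (hP : P.Finite)
    (hf : Respects1 P f)
    (hent : ∀ p ∈ P, Ordinal.omega0 < f p ∧ Ordinal.IsPrincipal (· + ·) (f p))
    {γ : Ordinal} (hγ : γ < omega1) (hγs : ∀ p ∈ P, BKlt s p → γ < f p) :
    ∃ v, γ < v ∧ Respects1 (insert s P) (fun p => if p = s then v else f p) := by
  set S := insert γ (f '' {p ∈ P | BKlt p s})
  have hS : S.Finite := (hP.subset (Set.sep_subset _ _)).image f |>.insert γ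
  have hSne : S.Nonempty := Set.insert_nonempty _ _
  have hSω₁ : sSup S < omega1 := (hS.csSup_lt_iff hSne).2 <| by
    rintro _ (rfl | ⟨p, hp, rfl⟩)
    exacts [hγ, (hf.1 p hp.1).1]
  have hS_right : ∀ p ∈ P, BKlt s p → sSup S < f p := fun p hp hsp =>
    (hS.csSup_lt_iff hSne).2 <| by
      rintro _ (rfl | ⟨p', hp', rfl⟩)
      exacts [hγs p hp hsp, hf.2 p' hp'.1 p hp (hp'.2.trans (fun _ _ _ => Nat.lt_trans) hsp)]
  have hv : sSup S < sSup S + Ordinal.omega0 :=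
    lt_add_of_pos_right _ Ordinal.omega0_pos
  have hne : ∀ p ∈ P, p ≠ s := fun p hp hps => hs (hps ▸ hp)
  refine ⟨sSup S + Ordinal.omega0, (le_csSup hS.bddAbove (Set.mem_insert _ _)).trans_lt hv,
    ⟨?_, ?_⟩⟩
  · rintro p (rfl | hp)
    · simpa using ⟨isPrincipal_add_omega1 hSω₁ omega0_lt_omega1,
        Ordinal.isSuccLimit_add _ Ordinal.isSuccLimit_omega0⟩
    · simpa [hne p hp] using hf.1 p hp
  · have hleft : ∀ p ∈ P, BKlt p s → f p < sSup S + Ordinal.omega0 := fun p hp hps =>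
      (le_csSup hS.bddAbove (Set.mem_insert_of_mem _ ⟨p, ⟨hp, hps⟩, rfl⟩)).trans_lt hv
    have hright : ∀ p ∈ P, BKlt s p → sSup S + Ordinal.omega0 < f p := fun p hp hsp =>
      (hent p hp).2 (hS_right p hp hsp) (hent p hp).1
    rintro p (rfl | hp) r (rfl | hr) hpr
    · exact absurd hpr (BKltBy.irrefl (fun _ _ => Nat.lt_asymm) _)
    · simpa [hne r hr] using hright r hr hpr
    · simpa [hne p hp] using hleft p hp hpr
    · simpa [hne p hp, hne r hr] using hf.2 p hp r hr hpr

variable {t : Option (List ℕ)}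

theorem exists_respectsP1 (ht : IsPartialLevelLe1Tree P t) (hf : Respects1 P f)
    (hent : ∀ p ∈ P, Ordinal.omega0 < f p ∧ Ordinal.IsPrincipal (· + ·) (f p)) :
    ∃ v, RespectsP1 P t f v := by
  cases t with
  | none => exact ⟨0, hf, Ordinal.omega0_pos⟩
  | some s =>
    obtain ⟨v, -, hv⟩ := exists_respects1_insert_gt ht.2.2.2.1 ht.1 hf hent
      (Ordinal.omega0_pos.trans omega0_lt_omega1)
      (fun p hp _ => Ordinal.omega0_pos.trans (hent p hp).1)
    exact ⟨v, hf, hv⟩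

theorem RespectsP1.exists_gt {γ : Ordinal} (ht : IsPartialLevelLe1Tree P t)
    (hent : ∀ p ∈ P, Ordinal.omega0 < f p ∧ Ordinal.IsPrincipal (· + ·) (f p))
    (h : RespectsP1 P t f γ) : ∃ v, γ < v ∧ RespectsP1 P t f v := by
  cases t with
  | none =>
    refine ⟨Order.succ γ, Order.lt_succ γ, h.1, ?_⟩
    exact Ordinal.isSuccLimit_omega0.succ_lt h.2
  | some s =>
    have hs : s ∉ P := ht.2.2.2.1
    have hne : ∀ p ∈ P, p ≠ s := fun p hp hps => hs (hps ▸ hp)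
    have hγ : γ < omega1 := by simpa using (h.2.1 s (Set.mem_insert _ _)).1
    have hγs : ∀ p ∈ P, BKlt s p → γ < f p := fun p hp hsp => by
      simpa [hne p hp] using h.2.2 s (Set.mem_insert _ _) p (Set.mem_insert_of_mem _ hp) hsp
    obtain ⟨v, hγv, hv⟩ := exists_respects1_insert_gt hs ht.1 h.1 hent hγ hγs
    exact ⟨v, hγv, h.1, hv⟩

end Respects

namespace Level2Tree

section

variable (Q : Level2Tree) {q r : List (List ℕ)} {f g : List ℕ → Ordinal}

theorem tr_take_eq (hq : q ∈ Q.dom) {l : ℕ} (hl : l ≤ q.length) :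
    Q.tr (q.take l) = {p | ∃ i < l, Q.nd (q.take i) = some p} := by
  induction l with
  | zero => ext p; simp [Q.tr_nil]
  | succ l ih =>
    obtain ⟨s, hs, htr⟩ := Q.compl q hq l (by omega)
    rw [htr, ih (by omega)]
    ext p
    simp only [Set.mem_insert_iff, Set.mem_ofPred_eq, Nat.lt_succ_iff_lt_or_eq, or_and_right,
      exists_or, exists_eq_left, hs, Option.some.injEq]
    rw [eq_comm, or_comm]

theorem mem_tr_iff (hq : q ∈ Q.dom) {p : List ℕ} :
    p ∈ Q.tr q ↔ ∃ i < q.length, Q.nd (q.take i) = some p := by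
  simpa using congrArg (p ∈ ·) (Q.tr_take_eq hq le_rfl)

theorem tr_take_subset (hq : q ∈ Q.dom) (l : ℕ) : Q.tr (q.take l) ⊆ Q.tr q := by
  intro p hp
  rw [Q.mem_tr_iff (Q.take_mem q hq l)] at hp
  obtain ⟨i, hi, hnd⟩ := hp
  rw [List.length_take, lt_min_iff] at hi
  rw [List.take_take, min_eq_left hi.1.le] at hnd
  exact (Q.mem_tr_iff hq).2 ⟨i, hi.2, hnd⟩

theorem nd_take_eq_some (hq : q ∈ Q.dom) {i : ℕ} (hi : i < q.length) :
    Q.nd (q.take i) = some (Q.ndVal (q.take i)) := by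
  obtain ⟨s, hs, -⟩ := Q.compl q hq i hi
  simp [ndVal, hs]

theorem ndVal_take_mem_tr (hq : q ∈ Q.dom) {i : ℕ} (hi : i < q.length) :
    Q.ndVal (q.take i) ∈ Q.tr q :=
  (Q.mem_tr_iff hq).2 ⟨i, hi, Q.nd_take_eq_some hq hi⟩

theorem length_oplus (f : List ℕ → Ordinal) (q : List (List ℕ)) :
    (Q.oplus f q).length = q.length := by
  simp [oplus]

theorem getElem_oplus (f : List ℕ → Ordinal) (q : List (List ℕ)) {i : ℕ}
    (hi : i < (Q.oplus f q).length) :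
    (Q.oplus f q)[i] = (f (Q.ndVal (q.take i)), some (q[i]'(by simpa [oplus] using hi))) := by
  simp [oplus, List.getElem?_eq_getElem (by simpa [oplus] using hi : i < q.length)]

theorem oplus_take (f : List ℕ → Ordinal) (q : List (List ℕ)) (n : ℕ) :
    (Q.oplus f q).take n = Q.oplus f (q.take n) := by
  apply List.ext_getElem (by simp [length_oplus])
  intro i h₁ h₂
  simp only [List.getElem_take, getElem_oplus, List.take_take]
  rw [min_eq_left (by simp at h₁; omega)]

theorem oplus_concat (f : List ℕ → Ordinal) (q : List (List ℕ)) (a : List ℕ) :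
    Q.oplus f (q ++ [a]) = Q.oplus f q ++ [(f (Q.ndVal q), some a)] := by
  apply List.ext_getElem (by simp [length_oplus])
  intro i h₁ h₂
  rw [getElem_oplus]
  rcases lt_or_eq_of_le (Nat.lt_succ_iff.1 (by simpa [length_oplus] using h₁)) with hi | rfl
  · simp [List.getElem_append_left, length_oplus, hi, getElem_oplus,
      List.take_append_of_le_length hi.le]
  · simp [length_oplus]

theorem oplus_eq_oplus_iff (hq : q ∈ Q.dom) :
    Q.oplus g r = Q.oplus f q ↔ r = q ∧ ∀ p ∈ Q.tr q, g p = f p := by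
  constructor
  · intro h
    have hlen : r.length = q.length := by simpa [length_oplus] using congrArg List.length h
    have hentry : ∀ i (hi : i < q.length),
        g (Q.ndVal (r.take i)) = f (Q.ndVal (q.take i)) ∧ r[i] = q[i] := fun i hi => by
      have hentry := List.getElem_of_eq h (by rw [length_oplus, hlen]; exact hi)
      rw [getElem_oplus, getElem_oplus] at hentry
      simpa using hentry
    have hrq : r = q := List.ext_getElem hlen fun i _ hi => (hentry i hi).2
    subst hrq
    refine ⟨rfl, fun p hp => ?_⟩
    obtain ⟨i, hi, hnd⟩ := (Q.mem_tr_iff hq).1 hp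
    obtain rfl : Q.ndVal (r.take i) = p := by simp [ndVal, hnd]
    exact (hentry i hi).1
  · rintro ⟨rfl, hgf⟩
    refine List.map_congr_left fun i hi => ?_
    rw [hgf _ (Q.ndVal_take_mem_tr hq (List.mem_range.1 hi))]

end

section

variable {Q : Level2Tree} {q r : List (List ℕ)} {f g : List ℕ → Ordinal}
  {β : Ordinal} {e : Option (List ℕ)}

theorem respectsP1_of_prefix_oplus (hq : q ∈ Q.dom) (hr : r ∈ Q.dom)
    (hg : Respects1 (Q.tr r) g) (hpre : Q.oplus f q ++ [(β, e)] <+: Q.oplus g r) :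
    RespectsP1 (Q.tr q) (Q.nd q) f β := by
  have hk : q.length < r.length := by
    simpa [length_oplus] using hpre.length_le
  have hsplit : Q.oplus f q ++ [(β, e)] =
      Q.oplus g (r.take q.length) ++ [(g (Q.ndVal (r.take q.length)), some r[q.length])] := by
    rw [List.prefix_iff_eq_take.1 hpre, Q.oplus_take, ← oplus_concat, List.take_concat_get']
    simp [length_oplus]
  obtain ⟨hoplus, hβ⟩ := List.append_inj' hsplit rfl
  obtain ⟨hrq, hgf⟩ := (Q.oplus_eq_oplus_iff hq).1 hoplus.symm
  obtain ⟨s, hs, htr⟩ := Q.compl r hr q.length hk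
  rw [hrq] at hs htr hβ
  obtain ⟨rfl, -⟩ := Prod.ext_iff.1 (List.singleton_inj.1 hβ)
  rw [show Q.ndVal q = s by simp [ndVal, hs], hs]
  refine respectsP1_some_of_respects1_insert (hg.mono_s11 ?_) fun p hp => (hgf p hp).symm
  rw [← htr, ← hrq]
  exact Q.tr_take_subset hr _

theorem respectsP1_of_oplus_append_prefix {z : List (Ordinal × Option (List ℕ))}
    (hq : q ∈ Q.dom) (hz : z ∈ Q.rep) (hpre : Q.oplus f q ++ [(β, e)] <+: z) :
    RespectsP1 (Q.tr q) (Q.nd q) f β := by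
  rcases hz with ⟨r, hr, g, hg, rfl⟩ | ⟨r, hr, g, w, hg, rfl⟩
  · exact respectsP1_of_prefix_oplus hq hr hg hpre
  by_cases hk : q.length < r.length
  · refine respectsP1_of_prefix_oplus (e := e) hq hr hg.respects1 ?_
    refine List.prefix_of_prefix_length_le hpre (List.prefix_append _ _) ?_
    simpa [length_oplus] using hk
  · have heq := hpre.eq_of_length (by
      have := hpre.length_le
      simp only [oplusNeg, List.length_append, length_oplus, List.length_singleton] at this ⊢
      omega)
    obtain ⟨hoplus, hβw⟩ := List.append_inj' heq rfl
    obtain ⟨rfl, hgf⟩ := (Q.oplus_eq_oplus_iff hq).1 hoplus.symm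
    obtain ⟨rfl, -⟩ := Prod.ext_iff.1 (List.singleton_inj.1 hβw)
    exact hg.congr hgf

theorem oplusNeg_mem_sideSet {v : Ordinal} (hv : RespectsP1 (Q.tr q) (Q.nd q) f v) :
    Q.oplusNeg f v q ∈ sideSet Q f q :=
  ⟨f, v, hv, fun _ _ => rfl, rfl⟩

theorem exists_mem_sideSet_gt (hq : q ∈ Q.dom) (hf : Respects1 (Q.tr q) f)
    (hent : ∀ p ∈ Q.tr q, Ordinal.omega0 < f p ∧ Ordinal.IsPrincipal (· + ·) (f p))
    {z : List (Ordinal × Option (List ℕ))} (hz : z ∈ Q.rep) (hzq : Rep2lt z (Q.oplus f q)) :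
    ∃ x ∈ sideSet Q f q, Rep2lt z x := by
  by_cases hpre : Q.oplus f q <+: z
  · obtain ⟨_ | ⟨⟨β, e⟩, rest⟩, rfl⟩ := hpre
    · rw [List.append_nil] at hzq
      exact absurd hzq (BKltBy.irrefl entryLt_asymm _)
    have hβ : RespectsP1 (Q.tr q) (Q.nd q) f β :=
      respectsP1_of_oplus_append_prefix (e := e) hq hz ⟨rest, by simp⟩
    obtain ⟨v, hβv, hv⟩ := hβ.exists_gt (Q.ptree q hq) hent
    exact ⟨_, oplusNeg_mem_sideSet hv, BKltBy.append_left _ (Or.inl (Or.inl hβv))⟩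
  · obtain ⟨v, hv⟩ := exists_respectsP1 (Q.ptree q hq) hf hent
    exact ⟨_, oplusNeg_mem_sideSet hv, hzq.append_of_not_prefix hpre _⟩

end

end Level2Tree

theorem stmt11_general (Q : Level2Tree)
    (q : List (List ℕ)) (hq : q ∈ Q.dom) (f : List ℕ → Ordinal)
    (hf : Respects1 (Q.tr q) f)
    (hent : ∀ p ∈ Q.tr q, Ordinal.omega0 < f p ∧
      ∀ b < f p, ∀ c < f p, b + c < f p) :
    Q.oplus f q ∈ Q.rep ∧
    (sideSet Q f q).Nonempty ∧
    (∀ x ∈ sideSet Q f q, Rep2lt x (Q.oplus f q) ∨ x = Q.oplus f q) ∧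
    ∀ z ∈ Q.rep, (∀ x ∈ sideSet Q f q, Rep2lt x z ∨ x = z) →
      (Rep2lt (Q.oplus f q) z ∨ Q.oplus f q = z) := by
  have hent' : ∀ p ∈ Q.tr q, Ordinal.omega0 < f p ∧ Ordinal.IsPrincipal (· + ·) (f p) :=
    fun p hp => ⟨(hent p hp).1, fun b c hb hc => (hent p hp).2 b hb c hc⟩
  refine ⟨Or.inl ⟨q, hq, f, hf, rfl⟩, ?_, ?_, fun z hz hub => ?_⟩
  · obtain ⟨v, hv⟩ := exists_respectsP1 (Q.ptree q hq) hf hent'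
    exact ⟨_, Level2Tree.oplusNeg_mem_sideSet hv⟩
  · rintro x ⟨f', v, -, hf'f, rfl⟩
    left
    rw [Level2Tree.oplusNeg, (Q.oplus_eq_oplus_iff hq).2 ⟨rfl, hf'f⟩]
    exact bKltBy_append_self _ (List.cons_ne_nil _ _)
  rcases bKltBy_trichotomous entryLt_trichotomous (Q.oplus f q) z with heq | hlt | hgt
  · exact Or.inr heq
  · exact Or.inl hlt
  obtain ⟨x, hx, hzx⟩ := Level2Tree.exists_mem_sideSet_gt hq hf hent' hz hgt
  rcases hub x hx with hxz | rfl
  · exact absurd hxz (hzx.asymm entryLt_asymm)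
  · exact absurd hzx (BKltBy.irrefl entryLt_asymm _)

/-- Assume boldface Π¹₁-determinacy. Let `Q` be a level-2 tree,
`q ∈ dom(Q)`, and `ᾱ` respect `Q_tree(q)` with every entry additively closed and
greater than `ω`. Then `ᾱ ⊕ q` is the least upper bound in `(rep(Q), <^Q)` of the
nonempty set of all `ᾱ' ⊕ q⌢(-1) ∈ rep(Q)` with `ᾱ'` respecting `Q(q)` and agreeing
with `ᾱ` on `Q_tree(q)`. -/
theorem stmt11 (hdet : BoldfacePi11Determinacy) (Q : Level2Tree)
    (q : List (List ℕ)) (hq : q ∈ Q.dom) (f : List ℕ → Ordinal)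
    (hf : Respects1 (Q.tr q) f)
    (hent : ∀ p ∈ Q.tr q, Ordinal.omega0 < f p ∧
      ∀ b < f p, ∀ c < f p, b + c < f p) :
    Q.oplus f q ∈ Q.rep ∧
    (sideSet Q f q).Nonempty ∧
    (∀ x ∈ sideSet Q f q, Rep2lt x (Q.oplus f q) ∨ x = Q.oplus f q) ∧
    ∀ z ∈ Q.rep, (∀ x ∈ sideSet Q f q, Rep2lt x z ∨ x = z) →
      (Rep2lt (Q.oplus f q) z ∨ Q.oplus f q = z) :=
  stmt11_general Q q hq f hf hent
end
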